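/- arXiv:0809.4049 — 2 statements merged into one kernel-verified Lean document; each statement's English description precedes it below -/
import Mathlib

section
/- Let n ≥ 1 and N ≥ 0 be integers, and let β ∈ [0,1] be a point at which the Bernoulli polynomial B_{n+1} attains its minimum on [0,1]. Then every real-valued trigonometric polynomial Q of degree at most N satisfying Q(x) ≤ 𝓑_{n+1}(x) for all x ∈ ℝ satisfies ∫₀¹ (𝓑_{n+1}(x) − Q(x)) dx ≥ −B_{n+1}(β)/(N+1)^{n+1}. -/
open MeasureTheory

/-- The `m`-th Bernoulli polynomial evaluated at a real number `x`,
with the generating function `t e^{xt}/(e^t - 1) = ∑ B_m(x) t^m / m!`. -/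
noncomputable def bernoulliPoly (m : ℕ) (x : ℝ) : ℝ :=
  Polynomial.aeval x (Polynomial.bernoulli m)

/-- The `m`-th Bernoulli periodic function `𝓑_m(x) = B_m(x - ⌊x⌋)`. -/
noncomputable def bernoulliPer (m : ℕ) (x : ℝ) : ℝ :=
  bernoulliPoly m (x - ⌊x⌋)

/-- `f : ℝ → ℂ` is a trigonometric polynomial of degree at most `N`:
`f x = ∑_{k=-N}^{N} c_k e^{2πikx}`. -/
def IsTrigPoly (N : ℕ) (f : ℝ → ℂ) : Prop :=
  ∃ c : ℤ → ℂ, ∀ x : ℝ,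
    f x = ∑ k ∈ Finset.Icc (-(N : ℤ)) (N : ℤ),
      c k * Complex.exp (2 * (Real.pi : ℂ) * Complex.I * (k : ℂ) * (x : ℂ))

/-! Sampling a trigonometric polynomial of degree `N` at the `N + 1` equally spaced points
`(β + j) / (N + 1)` integrates it exactly, so `∫₀¹ Q` is the mean of `Q` over these points. Since
`Q ≤ 𝓑_{n+1}`, that mean is at most the mean of `B_{n+1}` over the same points, which the
multiplication theorem for Bernoulli polynomials evaluates to `B_{n+1}(β) / (N + 1)^{n+1}`.
As `𝓑_{n+1}` has mean zero, this bounds `∫₀¹ (𝓑_{n+1} - Q) = -∫₀¹ Q` from below. -/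

open Finset Complex
open scoped Real

lemma bernoulliPoly_eq_bernoulliFun : bernoulliPoly = bernoulliFun := by
  ext m x
  rw [bernoulliPoly, bernoulliFun, Polynomial.eval_map_algebraMap]

lemma bernoulliPer_eq_bernoulliFun_fract (m : ℕ) (x : ℝ) :
    bernoulliPer m x = bernoulliFun m (Int.fract x) := by
  rw [bernoulliPer, bernoulliPoly_eq_bernoulliFun, Int.self_sub_floor]

lemma bernoulliPer_eqOn_Ico (m : ℕ) : Set.EqOn (bernoulliPer m) (bernoulliFun m) (Set.Ico 0 1) :=
  fun x hx => by rw [bernoulliPer_eq_bernoulliFun_fract, Int.fract_eq_self.mpr hx]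

-- Equality fails only for `m = 1` at `x = 1`, where `𝓑₁ 1 = -1/2 < B₁ 1 = 1/2`.
lemma bernoulliPer_le_bernoulliFun (m : ℕ) {x : ℝ} (hx : x ∈ Set.Icc (0 : ℝ) 1) :
    bernoulliPer m x ≤ bernoulliFun m x := by
  rcases (Set.mem_Icc.mp hx).2.lt_or_eq with hx1 | rfl
  · exact (bernoulliPer_eqOn_Ico m ⟨hx.1, hx1⟩).le
  · rw [bernoulliPer_eq_bernoulliFun_fract, Int.fract_one, bernoulliFun_eval_one]
    split_ifs <;> norm_num

lemma integral_bernoulliPer_sub {m : ℕ} (hm : m ≠ 0) {g : ℝ → ℝ}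
    (hg : IntervalIntegrable g volume 0 1) :
    ∫ x in (0 : ℝ)..1, (bernoulliPer m x - g x) = -∫ x in (0 : ℝ)..1, g x := by
  have hEq : Set.EqOn (fun x => bernoulliPer m x - g x) (fun x => bernoulliFun m x - g x)
      (Set.uIoo 0 1) := fun x hx => by
    rw [Set.uIoo_of_le zero_le_one] at hx
    simp only [bernoulliPer_eqOn_Ico m (Set.Ioo_subset_Ico_self hx)]
  rw [intervalIntegral.integral_congr_uIoo hEq,
    intervalIntegral.integral_sub (intervalIntegrable_bernoulliFun m 0 1) hg,
    integral_bernoulliFun_eq_zero hm, zero_sub]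

lemma sum_bernoulliFun_add_div (k : ℕ) {M : ℕ} (hM : M ≠ 0) (x : ℝ) :
    ∑ j ∈ range M, bernoulliFun k ((x + j) / M) = M * bernoulliFun k x / M ^ k := by
  have hM' : (M : ℝ) ≠ 0 := Nat.cast_ne_zero.mpr hM
  rw [eq_div_iff (pow_ne_zero k hM')]
  have := bernoulliFun_mul k hM (x / M)
  rw [mul_div_cancel₀ x hM'] at this
  simp only [add_div, this]
  field_simp

lemma integral_exp_two_pi_I_int_mul {k : ℤ} (hk : k ≠ 0) :
    ∫ x in (0 : ℝ)..1, exp (2 * π * I * k * x) = 0 := by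
  have hc : 2 * π * I * k ≠ 0 := by simp [Real.pi_ne_zero, I_ne_zero, hk]
  rw [integral_exp_mul_complex hc, ofReal_one, ofReal_zero, mul_one, mul_zero, exp_zero,
    mul_comm, exp_int_mul_two_pi_mul_I, sub_self, zero_div]

lemma sum_exp_two_pi_I_int_mul_add_div {M : ℕ} {k : ℤ} (hk : ¬ (M : ℤ) ∣ k) (β : ℝ) :
    ∑ j ∈ range M, exp (2 * π * I * k * ((β + j) / M : ℝ)) = 0 := by
  rcases eq_or_ne M 0 with rfl | hM
  · simp
  have hM' : (M : ℂ) ≠ 0 := Nat.cast_ne_zero.mpr hM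
  set w := exp (2 * π * I * k / M)
  have hw : w ≠ 1 := by
    rintro hw
    obtain ⟨n, hn⟩ := exp_eq_one_iff.mp hw
    refine hk ⟨n, ?_⟩
    have : (k : ℂ) = M * n := by field_simp at hn; exact hn
    exact_mod_cast this
  have hwM : w ^ M = 1 := by
    rw [← exp_nat_mul, mul_div_cancel₀ _ hM', mul_comm, exp_int_mul_two_pi_mul_I]
  have hterm (j : ℕ) :
      exp (2 * π * I * k * ((β + j) / M : ℝ)) = exp (2 * π * I * k * β / M) * w ^ j := by
    rw [← exp_nat_mul, ← exp_add]
    push_cast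
    ring_nf
  simp only [hterm, ← mul_sum, geom_sum_eq hw, hwM, sub_self, zero_div, mul_zero]

lemma sum_exp_two_pi_I_int_mul_add_div_eq_mul_integral {M : ℕ} {k : ℤ} (hk : |k| < M) (β : ℝ) :
    ∑ j ∈ range M, exp (2 * π * I * k * ((β + j) / M : ℝ)) =
      M * ∫ x in (0 : ℝ)..1, exp (2 * π * I * k * x) := by
  rcases eq_or_ne k 0 with rfl | hk0
  · simp
  rw [sum_exp_two_pi_I_int_mul_add_div (fun hdvd => hk0 (Int.eq_zero_of_abs_lt_dvd hdvd hk)),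
    integral_exp_two_pi_I_int_mul hk0, mul_zero]

namespace IsTrigPoly

variable {N : ℕ} {f : ℝ → ℂ}

lemma continuous (hf : IsTrigPoly N f) : Continuous f := by
  obtain ⟨c, hc⟩ := hf
  rw [funext hc]
  fun_prop

lemma sum_add_div_eq_mul_integral (hf : IsTrigPoly N f) {M : ℕ} (hNM : N < M) (β : ℝ) :
    ∑ j ∈ range M, f ((β + j) / M) = M * ∫ x in (0 : ℝ)..1, f x := by
  obtain ⟨c, hc⟩ := hf
  have hterm : ∀ k ∈ Icc (-(N : ℤ)) N,
      ∑ j ∈ range M, c k * exp (2 * π * I * k * ((β + j) / M : ℝ)) =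
        M * ∫ x in (0 : ℝ)..1, c k * exp (2 * π * I * k * x) := by
    intro k hk
    rw [← mul_sum, intervalIntegral.integral_const_mul,
      sum_exp_two_pi_I_int_mul_add_div_eq_mul_integral (abs_lt.mpr ⟨by grind, by grind⟩)]
    ring
  simp only [hc]
  rw [sum_comm, sum_congr rfl hterm, ← mul_sum, intervalIntegral.integral_finsetSum]
  exact fun k _ => (by fun_prop : Continuous _).intervalIntegrable 0 1

lemma continuous_of_ofReal {Q : ℝ → ℝ} (hQ : IsTrigPoly N fun x => (Q x : ℂ)) : Continuous Q :=
  isometry_ofReal.isEmbedding.continuous_iff.mpr hQ.continuous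

lemma sum_add_div_eq_mul_integral_of_ofReal {Q : ℝ → ℝ} (hQ : IsTrigPoly N fun x => (Q x : ℂ))
    {M : ℕ} (hNM : N < M) (β : ℝ) :
    ∑ j ∈ range M, Q ((β + j) / M) = M * ∫ x in (0 : ℝ)..1, Q x := by
  have h := hQ.sum_add_div_eq_mul_integral hNM β
  simp only [intervalIntegral.integral_ofReal] at h
  exact_mod_cast h

end IsTrigPoly

theorem minorant_lower_bound_general (n N : ℕ)
    (β : ℝ) (hβmem : β ∈ Set.Icc (0 : ℝ) 1)
    (Q : ℝ → ℝ) (hQtrig : IsTrigPoly N (fun x => (Q x : ℂ)))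
    (hQle : ∀ x : ℝ, Q x ≤ bernoulliPer (n + 1) x) :
    (∫ x in (0 : ℝ)..1, (bernoulliPer (n + 1) x - Q x)) ≥
      -(bernoulliPoly (n + 1) β) / ((N : ℝ) + 1) ^ (n + 1) := by
  have hsample_mem : ∀ j ∈ range (N + 1), (β + j) / ((N + 1 : ℕ) : ℝ) ∈ Set.Icc (0 : ℝ) 1 := by
    intro j hj
    have hjN : (j : ℝ) ≤ N := by exact_mod_cast Nat.lt_succ_iff.mp (mem_range.mp hj)
    push_cast
    constructor
    · exact div_nonneg (by linarith [hβmem.1, j.cast_nonneg (α := ℝ)]) (by positivity)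
    · rw [div_le_one (by positivity)]; linarith [hβmem.2]
  have hsum_le : ∑ j ∈ range (N + 1), Q ((β + j) / (N + 1 : ℕ)) ≤
      ∑ j ∈ range (N + 1), bernoulliFun (n + 1) ((β + j) / (N + 1 : ℕ)) :=
    sum_le_sum fun j hj => (hQle _).trans (bernoulliPer_le_bernoulliFun _ (hsample_mem j hj))
  rw [hQtrig.sum_add_div_eq_mul_integral_of_ofReal N.lt_succ_self,
    sum_bernoulliFun_add_div _ N.succ_ne_zero] at hsum_le
  push_cast [mul_div_assoc] at hsum_le
  rw [integral_bernoulliPer_sub n.succ_ne_zero (hQtrig.continuous_of_ofReal.intervalIntegrable 0 1),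
    bernoulliPoly_eq_bernoulliFun, ge_iff_le, neg_div, neg_le_neg_iff]
  exact le_of_mul_le_mul_left hsum_le (by positivity)

theorem minorant_lower_bound (n N : ℕ) (hn : 1 ≤ n)
    (β : ℝ) (hβmem : β ∈ Set.Icc (0 : ℝ) 1)
    (hβ : ∀ x ∈ Set.Icc (0 : ℝ) 1, bernoulliPoly (n + 1) β ≤ bernoulliPoly (n + 1) x)
    (Q : ℝ → ℝ) (hQtrig : IsTrigPoly N (fun x => (Q x : ℂ)))
    (hQle : ∀ x : ℝ, Q x ≤ bernoulliPer (n + 1) x) :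
    (∫ x in (0 : ℝ)..1, (bernoulliPer (n + 1) x - Q x)) ≥
      -(bernoulliPoly (n + 1) β) / ((N : ℝ) + 1) ^ (n + 1) :=
  minorant_lower_bound_general n N β hβmem Q hQtrig hQle
end

section
/- Let n ≥ 1, N ≥ 0 and M ≥ 1 be integers, let x_1, …, x_M ∈ ℝ, and suppose Q(x) = Σ_{|k|≤N} q_k e^{2πikx} and P(x) = Σ_{|k|≤N} p_k e^{2πikx} are real-valued trigonometric polynomials of degree at most N satisfying Q(x) ≤ 𝓑_{n+1}(x) ≤ P(x) for all x ∈ ℝ. Then for every y ∈ ℝ, |Σ_{m=1}^{M} 𝓑_{n+1}(x_m − y)| ≤ max( M·|q_0| + Σ_{0<|k|≤N} |q_k|·|Σ_{m=1}^{M} e^{2πikx_m}| , M·|p_0| + Σ_{0<|k|≤N} |p_k|·|Σ_{m=1}^{M} e^{2πikx_m}| ). In particular, the generalized discrepancy sup_{y∈ℝ} |Σ_{m=1}^{M} 𝓑_{n+1}(x_m − y)| is bounded by the right-hand side. -/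
open MeasureTheory

/-!
Both `Q` and `P` bound the Bernoulli function, so `∑ₘ Q(xₘ - y) ≤ ∑ₘ 𝓑_{n+1}(xₘ - y) ≤ ∑ₘ P(xₘ - y)`
and it suffices to bound `|∑ₘ R(xₘ - y)|` for a trigonometric polynomial `R = ∑ₖ rₖ e(kt)`.
Exchanging the sums gives `∑ₖ rₖ e(-ky) ∑ₘ e(k xₘ)`, and the triangle inequality with `|e(-ky)| = 1`
yields the bound, the term `k = 0` contributing `M |r₀|`.
-/

open Complex Finset Real

noncomputable def trigPoly (N : ℕ) (c : ℤ → ℂ) (t : ℝ) : ℂ :=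
  ∑ k ∈ Icc (-(N : ℤ)) N, c k * exp (2 * π * I * k * t)

noncomputable def expSum {ι : Type*} [Fintype ι] (x : ι → ℝ) (k : ℤ) : ℂ :=
  ∑ m, exp (2 * π * I * k * x m)

lemma norm_exp_two_pi_I_mul (k : ℤ) (t : ℝ) : ‖exp (2 * π * I * k * t)‖ = 1 := by
  rw [norm_exp]
  simp [mul_re, mul_im]

section

variable {ι : Type*} [Fintype ι]

@[simp]
lemma expSum_zero (x : ι → ℝ) : expSum x 0 = Fintype.card ι := by
  simp [expSum]

lemma sum_trigPoly_sub (N : ℕ) (c : ℤ → ℂ) (x : ι → ℝ) (y : ℝ) :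
    ∑ m, trigPoly N c (x m - y) =
      ∑ k ∈ Icc (-(N : ℤ)) N, c k * exp (2 * π * I * k * (-y : ℝ)) * expSum x k := by
  simp only [trigPoly, expSum, mul_sum]
  rw [sum_comm]
  refine sum_congr rfl fun k _ => sum_congr rfl fun m _ => ?_
  rw [mul_assoc (c k), ← Complex.exp_add]
  push_cast
  ring_nf

lemma norm_sum_trigPoly_sub_le (N : ℕ) (c : ℤ → ℂ) (x : ι → ℝ) (y : ℝ) :
    ‖∑ m, trigPoly N c (x m - y)‖ ≤
      Fintype.card ι * ‖c 0‖ + ∑ k ∈ (Icc (-(N : ℤ)) N).erase 0, ‖c k‖ * ‖expSum x k‖ := by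
  have h0 : (0 : ℤ) ∈ Icc (-(N : ℤ)) N := by simp
  have hterm : ∀ k : ℤ, ‖c k * exp (2 * π * I * k * (-y : ℝ)) * expSum x k‖ = ‖c k‖ * ‖expSum x k‖ :=
    fun k => by rw [norm_mul, norm_mul, norm_exp_two_pi_I_mul, mul_one]
  calc ‖∑ m, trigPoly N c (x m - y)‖
      ≤ ∑ k ∈ Icc (-(N : ℤ)) N, ‖c k * exp (2 * π * I * k * (-y : ℝ)) * expSum x k‖ := by
        rw [sum_trigPoly_sub]
        exact norm_sum_le _ _
    _ = _ := by
        simp only [hterm, ← add_sum_erase _ _ h0, expSum_zero, Complex.norm_natCast, mul_comm ‖c 0‖]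

lemma abs_sum_sub_le_of_trigPoly {R : ℝ → ℝ} (N : ℕ) (c : ℤ → ℂ)
    (hR : ∀ t, (R t : ℂ) = trigPoly N c t) (x : ι → ℝ) (y : ℝ) :
    |∑ m, R (x m - y)| ≤
      Fintype.card ι * ‖c 0‖ + ∑ k ∈ (Icc (-(N : ℤ)) N).erase 0, ‖c k‖ * ‖expSum x k‖ := by
  rw [← Real.norm_eq_abs, ← norm_real, ofReal_sum]
  simpa only [hR] using norm_sum_trigPoly_sub_le N c x y

end

lemma abs_sum_le_max_of_le_of_le {ι : Type*} (s : Finset ι) {f g h : ι → ℝ}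
    (hgf : ∀ i ∈ s, g i ≤ f i) (hfh : ∀ i ∈ s, f i ≤ h i) {a b : ℝ}
    (hg : |∑ i ∈ s, g i| ≤ a) (hh : |∑ i ∈ s, h i| ≤ b) :
    |∑ i ∈ s, f i| ≤ max a b := by
  rw [abs_le] at hg hh ⊢
  constructor
  · calc -max a b ≤ -a := neg_le_neg (le_max_left a b)
      _ ≤ ∑ i ∈ s, g i := hg.1
      _ ≤ ∑ i ∈ s, f i := sum_le_sum hgf
  · calc ∑ i ∈ s, f i ≤ ∑ i ∈ s, h i := sum_le_sum hfh
      _ ≤ b := hh.2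
      _ ≤ max a b := le_max_right a b

theorem erdos_turan_type_bound_general (n N M : ℕ)
    (x : Fin M → ℝ) (q p : ℤ → ℂ) (Q P : ℝ → ℝ)
    (hQ : ∀ t : ℝ, (Q t : ℂ) = ∑ k ∈ Finset.Icc (-(N : ℤ)) (N : ℤ),
      q k * Complex.exp (2 * (Real.pi : ℂ) * Complex.I * (k : ℂ) * (t : ℂ)))
    (hP : ∀ t : ℝ, (P t : ℂ) = ∑ k ∈ Finset.Icc (-(N : ℤ)) (N : ℤ),
      p k * Complex.exp (2 * (Real.pi : ℂ) * Complex.I * (k : ℂ) * (t : ℂ)))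
    (hQle : ∀ t : ℝ, Q t ≤ bernoulliPer (n + 1) t)
    (hPge : ∀ t : ℝ, bernoulliPer (n + 1) t ≤ P t) :
    ∀ y : ℝ, |∑ m : Fin M, bernoulliPer (n + 1) (x m - y)| ≤
      max
        ((M : ℝ) * ‖q 0‖ +
          ∑ k ∈ (Finset.Icc (-(N : ℤ)) (N : ℤ)).erase 0,
            ‖q k‖ *
              ‖∑ m : Fin M,
                Complex.exp (2 * (Real.pi : ℂ) * Complex.I * (k : ℂ) * ((x m : ℝ) : ℂ))‖)
        ((M : ℝ) * ‖p 0‖ +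
          ∑ k ∈ (Finset.Icc (-(N : ℤ)) (N : ℤ)).erase 0,
            ‖p k‖ *
              ‖∑ m : Fin M,
                Complex.exp (2 * (Real.pi : ℂ) * Complex.I * (k : ℂ) * ((x m : ℝ) : ℂ))‖) := by
  intro y
  have hQb := abs_sum_sub_le_of_trigPoly N q hQ x y
  have hPb := abs_sum_sub_le_of_trigPoly N p hP x y
  rw [Fintype.card_fin] at hQb hPb
  exact abs_sum_le_max_of_le_of_le _ (fun m _ => hQle (x m - y)) (fun m _ => hPge (x m - y)) hQb hPb

theorem erdos_turan_type_bound (n N M : ℕ) (hn : 1 ≤ n) (hM : 1 ≤ M)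
    (x : Fin M → ℝ) (q p : ℤ → ℂ) (Q P : ℝ → ℝ)
    (hQ : ∀ t : ℝ, (Q t : ℂ) = ∑ k ∈ Finset.Icc (-(N : ℤ)) (N : ℤ),
      q k * Complex.exp (2 * (Real.pi : ℂ) * Complex.I * (k : ℂ) * (t : ℂ)))
    (hP : ∀ t : ℝ, (P t : ℂ) = ∑ k ∈ Finset.Icc (-(N : ℤ)) (N : ℤ),
      p k * Complex.exp (2 * (Real.pi : ℂ) * Complex.I * (k : ℂ) * (t : ℂ)))
    (hQle : ∀ t : ℝ, Q t ≤ bernoulliPer (n + 1) t)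
    (hPge : ∀ t : ℝ, bernoulliPer (n + 1) t ≤ P t) :
    ∀ y : ℝ, |∑ m : Fin M, bernoulliPer (n + 1) (x m - y)| ≤
      max
        ((M : ℝ) * ‖q 0‖ +
          ∑ k ∈ (Finset.Icc (-(N : ℤ)) (N : ℤ)).erase 0,
            ‖q k‖ *
              ‖∑ m : Fin M,
                Complex.exp (2 * (Real.pi : ℂ) * Complex.I * (k : ℂ) * ((x m : ℝ) : ℂ))‖)
        ((M : ℝ) * ‖p 0‖ +
          ∑ k ∈ (Finset.Icc (-(N : ℤ)) (N : ℤ)).erase 0,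
            ‖p k‖ *
              ‖∑ m : Fin M,
                Complex.exp (2 * (Real.pi : ℂ) * Complex.I * (k : ℂ) * ((x m : ℝ) : ℂ))‖) :=
  erdos_turan_type_bound_general n N M x q p Q P hQ hP hQle hPge
end
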